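/- arXiv:1208.3694 — 2 statements merged into one kernel-verified Lean document; each statement's English description precedes it below -/
import Mathlib

section
/- Let 1 ≤ p < ∞ with conjugate exponent q, let F ∈ L^p(ℝ), let g ∈ L^q(ℝ) and let G(x) = ∫_0^x g(t) dt. For 0 < M < N and ε > 0 define E_{(M,N),ε} = { x ∈ (M,N) : |F(x)G(x)| > ε }, and let λ denote Lebesgue measure. If 1 < p < ∞ then λ(E_{(M,N),ε})/(N−M) ≤ ‖F·χ_{(M,N)}‖_p ‖g‖_q (N^q − M^q)^{1/q} / (ε q^{1/q} (N−M)), and if p = 1 then λ(E_{(M,N),ε})/(N−M) ≤ ‖F·χ_{(M,N)}‖_1 ‖g‖_∞ N / (ε (N−M)). -/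
open MeasureTheory Filter Topology ENNReal

/-! By Chebyshev's inequality `ε λ(E) ≤ ∫_{(M,N)} |F G|`, which Hölder's inequality bounds
by `‖F χ_{(M,N)}‖_p ‖G‖_{L^q(M,N)}`. Hölder on `(0, x)` gives `|G x| ≤ ‖g‖_q x^{1/p}`, so
`‖G‖_{L^q(M,N)} ≤ ‖g‖_q ‖x^{1/p}‖_{L^q(M,N)}`; for `q < ∞` the last norm equals
`((N^q - M^q)/q)^{1/q}` because `q/p = q - 1`, and for `q = ∞` it is at most `N`. -/

open Set

theorem MeasureTheory.LocallyIntegrable.continuous_primitive {E : Type*} [NormedAddCommGroup E]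
    [NormedSpace ℝ E] {g : ℝ → E} (hg : LocallyIntegrable g volume) (a : ℝ) :
    Continuous fun x => ∫ t in a..x, g t :=
  intervalIntegral.continuous_primitive
    (fun _ _ => (hg.integrableOn_isCompact isCompact_uIcc).intervalIntegrable) a

theorem ofReal_mul_measure_lt_abs_le_eLpNorm_one {α : Type*} [MeasurableSpace α]
    {μ : Measure α} {s : Set α} {f : α → ℝ} (hf : AEStronglyMeasurable f (μ.restrict s)) (ε : ℝ) :
    ENNReal.ofReal ε * μ {x | x ∈ s ∧ ε < |f x|} ≤ eLpNorm f 1 (μ.restrict s) := by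
  have hsub : μ {x | x ∈ s ∧ ε < |f x|} ≤ μ.restrict s {x | ENNReal.ofReal ε ≤ ‖f x‖ₑ} := by
    refine le_trans (measure_mono fun x hx => ?_) (Measure.le_restrict_apply _ _)
    refine ⟨?_, hx.1⟩
    rw [mem_ofPred_eq, Real.enorm_eq_ofReal_abs]
    exact ENNReal.ofReal_le_ofReal hx.2.le
  calc ENNReal.ofReal ε * μ {x | x ∈ s ∧ ε < |f x|}
      ≤ ENNReal.ofReal ε * μ.restrict s {x | ENNReal.ofReal ε ≤ ‖f x‖ₑ} := by gcongr
    _ ≤ eLpNorm f 1 (μ.restrict s) := by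
      rw [eLpNorm_one_eq_lintegral_enorm]
      exact mul_meas_ge_le_lintegral₀ hf.enorm _

/-- The exponent `1 - 1 / q.toReal` is `1 / p` for the conjugate exponent `p`, also when
`q = ∞`, where `q.toReal = 0`. -/
theorem enorm_primitive_le {E : Type*} [NormedAddCommGroup E] [NormedSpace ℝ E] {g : ℝ → E}
    {q : ℝ≥0∞} (hq : 1 ≤ q) (hg : AEStronglyMeasurable g volume) {x : ℝ} (hx : 0 ≤ x) :
    ‖∫ t in (0 : ℝ)..x, g t‖ₑ ≤
      eLpNorm g q volume * ENNReal.ofReal (x ^ (1 - 1 / q.toReal)) := by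
  have hr : 0 ≤ 1 - 1 / q.toReal := by
    rcases eq_or_ne q ⊤ with rfl | hq'
    · simp
    · have : 1 ≤ q.toReal := by simpa using (ENNReal.toReal_le_toReal one_ne_top hq').2 hq
      rw [sub_nonneg]; exact div_le_one_of_le₀ this (by linarith)
  calc ‖∫ t in (0 : ℝ)..x, g t‖ₑ ≤ eLpNorm g 1 (volume.restrict (Ioc 0 x)) := by
        rw [intervalIntegral.integral_of_le hx, eLpNorm_one_eq_lintegral_enorm]
        exact enorm_integral_le_lintegral_enorm _
    _ ≤ eLpNorm g q (volume.restrict (Ioc 0 x)) *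
          (volume.restrict (Ioc 0 x) univ) ^ (1 / (1 : ℝ≥0∞).toReal - 1 / q.toReal) :=
        eLpNorm_le_eLpNorm_mul_rpow_measure_univ (p := 1) hq hg.restrict
    _ ≤ eLpNorm g q volume * ENNReal.ofReal (x ^ (1 - 1 / q.toReal)) := by
        rw [Measure.restrict_apply_univ, Real.volume_Ioc, sub_zero, toReal_one, div_one,
          ENNReal.ofReal_rpow_of_nonneg hx hr]
        gcongr
        exact Measure.restrict_le_self

theorem eLpNorm_primitive_le {E : Type*} [NormedAddCommGroup E] [NormedSpace ℝ E] {g : ℝ → E}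
    {q : ℝ≥0∞} (hq : 1 ≤ q) (hg : AEStronglyMeasurable g volume) {s : Set ℝ}
    (hs : MeasurableSet s) (hs0 : s ⊆ Ici 0) :
    eLpNorm (fun x => ∫ t in (0 : ℝ)..x, g t) q (volume.restrict s) ≤
      eLpNorm g q volume *
        eLpNorm (fun x : ℝ => x ^ (1 - 1 / q.toReal)) q (volume.restrict s) := by
  refine eLpNorm_le_mul_eLpNorm_of_ae_le_mul'' q (by fun_prop) ?_
  filter_upwards [ae_restrict_mem hs] with x hx
  have hx0 : 0 ≤ x := hs0 hx
  rw [Real.enorm_eq_ofReal (Real.rpow_nonneg hx0 _)]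
  exact enorm_primitive_le hq hg hx0

theorem eLpNorm_rpow_restrict_Ioo {q : ℝ≥0∞} (hq0 : q ≠ 0) (hq : q ≠ ⊤) {M N : ℝ}
    (hM : 0 < M) (hMN : M ≤ N) :
    eLpNorm (fun x : ℝ => x ^ (1 - 1 / q.toReal)) q (volume.restrict (Ioo M N)) =
      ENNReal.ofReal
        ((N ^ q.toReal - M ^ q.toReal) ^ (1 / q.toReal) / q.toReal ^ (1 / q.toReal)) := by
  set r := q.toReal
  have hr : 0 < r := ENNReal.toReal_pos hq0 hq
  have hpow : ∀ x ∈ Ioo M N, ‖x ^ (1 - 1 / r)‖ₑ ^ r = ENNReal.ofReal (x ^ (r - 1)) := by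
    intro x hx
    have hx0 : 0 < x := hM.trans hx.1
    rw [Real.enorm_eq_ofReal (Real.rpow_nonneg hx0.le _), ENNReal.ofReal_rpow_of_nonneg
      (Real.rpow_nonneg hx0.le _) hr.le, ← Real.rpow_mul hx0.le]
    congr 2
    field_simp
  have hint : ∫ x in Ioo M N, x ^ (r - 1) = (N ^ r - M ^ r) / r := by
    rw [← integral_Ioc_eq_integral_Ioo, ← intervalIntegral.integral_of_le hMN,
      integral_rpow (Or.inl (by linarith)), sub_add_cancel]
  have hNM : 0 ≤ N ^ r - M ^ r := sub_nonneg.2 (Real.rpow_le_rpow hM.le hMN hr.le)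
  rw [eLpNorm_eq_lintegral_rpow_enorm_toReal hq0 hq,
    setLIntegral_congr_fun measurableSet_Ioo hpow, ← ofReal_integral_eq_lintegral_ofReal, hint,
    ENNReal.ofReal_rpow_of_nonneg (div_nonneg hNM hr.le) (by positivity),
    Real.div_rpow hNM hr.le]
  · refine (ContinuousOn.integrableOn_Icc ?_).mono_set Ioo_subset_Icc_self
    exact continuousOn_id.rpow_const fun x hx => Or.inl (hM.trans_le hx.1).ne'
  · filter_upwards [ae_restrict_mem measurableSet_Ioo] with x hx
    exact Real.rpow_nonneg (hM.trans hx.1).le _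

theorem eLpNorm_id_top_restrict_Ioo_le {M N : ℝ} (hM : 0 ≤ M) :
    eLpNorm (fun x : ℝ => x) ⊤ (volume.restrict (Ioo M N)) ≤ ENNReal.ofReal N := by
  rw [eLpNorm_exponent_top]
  refine eLpNormEssSup_le_of_ae_bound ?_
  filter_upwards [ae_restrict_mem measurableSet_Ioo] with x hx
  rw [Real.norm_of_nonneg (hM.trans hx.1.le)]
  exact hx.2.le

theorem ofReal_mul_measure_lt_abs_mul_primitive_le {p q : ℝ≥0∞} [p.HolderConjugate q]
    {F g : ℝ → ℝ} (hF : AEStronglyMeasurable F volume) (hg : MemLp g q volume) {s : Set ℝ}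
    (hs : MeasurableSet s) (hs0 : s ⊆ Ici 0) (ε : ℝ) :
    ENNReal.ofReal ε * volume {x | x ∈ s ∧ ε < |F x * ∫ t in (0 : ℝ)..x, g t|} ≤
      eLpNorm (s.indicator F) p volume * eLpNorm g q volume *
        eLpNorm (fun x : ℝ => x ^ (1 - 1 / q.toReal)) q (volume.restrict s) := by
  have hq : 1 ≤ q := ENNReal.HolderConjugate.one_le q p
  have hG := (hg.locallyIntegrable hq).continuous_primitive 0
  calc ENNReal.ofReal ε * volume {x | x ∈ s ∧ ε < |F x * ∫ t in (0 : ℝ)..x, g t|}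
      ≤ eLpNorm (fun x => F x * ∫ t in (0 : ℝ)..x, g t) 1 (volume.restrict s) :=
        ofReal_mul_measure_lt_abs_le_eLpNorm_one (hF.restrict.mul hG.aestronglyMeasurable) ε
    _ ≤ eLpNorm F p (volume.restrict s) *
          eLpNorm (fun x => ∫ t in (0 : ℝ)..x, g t) q (volume.restrict s) := by
        simpa using eLpNorm_le_eLpNorm_mul_eLpNorm'_of_norm (p := p) (q := q) (r := 1)
          hF.restrict hG.aestronglyMeasurable (fun a b => a * b) 1
          (.of_forall fun x => by rw [NNReal.coe_one, one_mul, norm_mul])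
    _ ≤ _ := by
        rw [eLpNorm_indicator_eq_eLpNorm_restrict hs, mul_assoc]
        gcongr
        exact eLpNorm_primitive_le hq hg.aestronglyMeasurable hs hs0

theorem toReal_div_le_of_ofReal_mul_le {V A C : ℝ≥0∞} {ε r L : ℝ} (hε : 0 < ε) (hL : 0 < L)
    (hr : 0 ≤ r) (hA : A ≠ ⊤) (hC : C ≠ ⊤)
    (h : ENNReal.ofReal ε * V ≤ A * C * ENNReal.ofReal r) :
    V.toReal / L ≤ A.toReal * C.toReal * r / (ε * L) := by
  have h' := ENNReal.toReal_mono (by finiteness) h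
  rw [toReal_mul, toReal_mul, toReal_mul, toReal_ofReal hε.le, toReal_ofReal hr] at h'
  rw [div_le_div_iff₀ hL (by positivity)]
  nlinarith

theorem stmt4_general (p q : ℝ≥0∞) (hpq : 1 / p + 1 / q = 1)
    (F g : ℝ → ℝ) (hF : MemLp F p volume) (hg : MemLp g q volume)
    (G : ℝ → ℝ) (hG : ∀ x, G x = ∫ t in (0 : ℝ)..x, g t)
    (M N ε : ℝ) (hM : 0 < M) (hMN : M < N) (hε : 0 < ε) :
    (1 < p →
      (volume {x : ℝ | x ∈ Set.Ioo M N ∧ ε < |F x * G x|}).toReal / (N - M) ≤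
        (eLpNorm ((Set.Ioo M N).indicator F) p volume).toReal *
          (eLpNorm g q volume).toReal *
          (N ^ q.toReal - M ^ q.toReal) ^ (1 / q.toReal) /
          (ε * q.toReal ^ (1 / q.toReal) * (N - M))) ∧
    (p = 1 →
      (volume {x : ℝ | x ∈ Set.Ioo M N ∧ ε < |F x * G x|}).toReal / (N - M) ≤
        (eLpNorm ((Set.Ioo M N).indicator F) 1 volume).toReal *
          (eLpNorm g ⊤ volume).toReal * N / (ε * (N - M))) := by
  have : p.HolderConjugate q := ENNReal.holderConjugate_iff.2 (by simpa [one_div] using hpq)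
  obtain rfl : G = fun x => ∫ t in (0 : ℝ)..x, g t := funext hG
  have key := ofReal_mul_measure_lt_abs_mul_primitive_le (p := p) (s := Ioo M N)
    hF.aestronglyMeasurable hg measurableSet_Ioo (fun x hx => (hM.trans hx.1).le) ε
  have hA : eLpNorm ((Ioo M N).indicator F) p volume ≠ ⊤ :=
    (hF.indicator measurableSet_Ioo).eLpNorm_ne_top
  have hNM : 0 < N - M := sub_pos.2 hMN
  refine ⟨fun hp => ?_, fun hp => ?_⟩
  · have hq : q ≠ ⊤ := (ENNReal.HolderConjugate.eq_top_iff_eq_one q p).not.2 hp.ne'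
    have hq0 : q ≠ 0 := ENNReal.HolderConjugate.ne_zero q p
    rw [eLpNorm_rpow_restrict_Ioo hq0 hq hM hMN.le] at key
    refine (toReal_div_le_of_ofReal_mul_le hε hNM ?_ hA hg.eLpNorm_ne_top key).trans_eq
      (by field_simp)
    have hr : 0 ≤ q.toReal := ENNReal.toReal_nonneg
    exact div_nonneg (Real.rpow_nonneg (sub_nonneg.2 (Real.rpow_le_rpow hM.le hMN.le hr)) _)
      (by positivity)
  · subst hp
    obtain rfl : q = ⊤ := (ENNReal.HolderConjugate.eq_top_iff_eq_one q 1).2 rfl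
    simp only [toReal_top, _root_.div_zero, sub_zero, Real.rpow_one] at key
    refine toReal_div_le_of_ofReal_mul_le hε hNM (hM.trans hMN).le hA hg.eLpNorm_ne_top ?_
    exact key.trans (by gcongr; exact eLpNorm_id_top_restrict_Ioo_le hM.le)

/-- Chebyshev-type estimate for the relative measure of
`E = {x ∈ (M,N) : |F(x)G(x)| > ε}` where `F ∈ L^p`, `g ∈ L^q` (conjugate exponents)
and `G(x) = ∫_0^x g`. -/
theorem stmt4 (p q : ℝ≥0∞) (hp : 1 ≤ p) (hp' : p ≠ ⊤) (hpq : 1 / p + 1 / q = 1)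
    (F g : ℝ → ℝ) (hF : MemLp F p volume) (hg : MemLp g q volume)
    (G : ℝ → ℝ) (hG : ∀ x, G x = ∫ t in (0 : ℝ)..x, g t)
    (M N ε : ℝ) (hM : 0 < M) (hMN : M < N) (hε : 0 < ε) :
    (1 < p →
      (volume {x : ℝ | x ∈ Set.Ioo M N ∧ ε < |F x * G x|}).toReal / (N - M) ≤
        (eLpNorm ((Set.Ioo M N).indicator F) p volume).toReal *
          (eLpNorm g q volume).toReal *
          (N ^ q.toReal - M ^ q.toReal) ^ (1 / q.toReal) /
          (ε * q.toReal ^ (1 / q.toReal) * (N - M))) ∧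
    (p = 1 →
      (volume {x : ℝ | x ∈ Set.Ioo M N ∧ ε < |F x * G x|}).toReal / (N - M) ≤
        (eLpNorm ((Set.Ioo M N).indicator F) 1 volume).toReal *
          (eLpNorm g ⊤ volume).toReal * N / (ε * (N - M))) :=
  stmt4_general p q hpq F g hF hg G hG M N ε hM hMN hε
end

section
/- Let 1 ≤ p < ∞ and let α > 1/p. Suppose f : ℝ → ℝ is measurable, the function t ↦ (1 + |t|^α) f(t) is Lebesgue integrable on ℝ, and ∫_{-∞}^{∞} f(t) dt = 0. Then the function F(x) = ∫_{-∞}^x f(t) dt belongs to L^p(ℝ). -/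
open MeasureTheory

/-!
Since `∫ f = 0`, for `x ≥ 0` we have `F x = -∫_{(x, ∞)} f`, so in either case `F x` is an
integral of `f` over a half-line on which `|t| ≥ |x|`. Dividing by the weight there
gives `|F x| ≤ ‖(1 + |t|^α) f‖₁ / (1 + |x|^α) ≤ C (1 + |x|)^(-α)`, and `(1 + |x|)^(-α)` lies in
`L^p` because `α p > 1`.
-/

section

variable {X E : Type*} [MeasurableSpace X] {μ : Measure X} [NormedAddCommGroup E]
  [NormedSpace ℝ E]

theorem MeasureTheory.Integrable.of_smul_of_one_le {w : X → ℝ} {f : X → E}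
    (hwm : AEMeasurable w μ) (hw : ∀ x, 1 ≤ w x) (h : Integrable (fun x => w x • f x) μ) :
    Integrable f μ := by
  have hf : f = fun x => (w x)⁻¹ • (w x • f x) := by
    ext x; rw [inv_smul_smul₀ (by linarith [hw x])]
  refine h.mono (hf ▸ hwm.inv.aestronglyMeasurable.smul h.1) (ae_of_all _ fun x => ?_)
  rw [norm_smul]
  exact le_mul_of_one_le_left (norm_nonneg _) ((hw x).trans (Real.le_norm_self _))

theorem norm_setIntegral_le_integral_norm_smul_div {s : Set X} (hs : MeasurableSet s)
    {w : X → ℝ} {f : X → E} {c : ℝ} (hc : 0 < c) (hw : ∀ x ∈ s, c ≤ w x)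
    (h : Integrable (fun x => w x • f x) μ) :
    ‖∫ x in s, f x ∂μ‖ ≤ (∫ x, ‖w x • f x‖ ∂μ) / c := by
  have hbound : ∀ x ∈ s, ‖f x‖ ≤ c⁻¹ * ‖w x • f x‖ := by
    intro x hx
    rw [norm_smul, Real.norm_of_nonneg (hc.le.trans (hw x hx)), le_inv_mul_iff₀ hc]
    exact mul_le_mul_of_nonneg_right (hw x hx) (norm_nonneg _)
  calc ‖∫ x in s, f x ∂μ‖ ≤ ∫ x in s, c⁻¹ * ‖w x • f x‖ ∂μ :=
        norm_integral_le_of_norm_le (h.norm.const_mul _).integrableOn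
          ((ae_restrict_iff' hs).2 (ae_of_all _ hbound))
    _ = c⁻¹ * ∫ x in s, ‖w x • f x‖ ∂μ := integral_const_mul _ _
    _ ≤ c⁻¹ * ∫ x, ‖w x • f x‖ ∂μ :=
        mul_le_mul_of_nonneg_left
          (setIntegral_le_integral h.norm (ae_of_all _ fun _ => norm_nonneg _))
          (inv_nonneg.2 hc.le)
    _ = (∫ x, ‖w x • f x‖ ∂μ) / c := inv_mul_eq_div _ _

end

section

variable {E : Type*} [NormedAddCommGroup E] [NormedSpace ℝ E] [FiniteDimensional ℝ E]
  [MeasurableSpace E] [BorelSpace E] {μ : Measure E} [μ.IsAddHaarMeasure]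

theorem memLp_one_add_norm_rpow_neg {p : ENNReal} (hp0 : p ≠ 0) (hp : p ≠ ⊤) {r : ℝ}
    (hr : (Module.finrank ℝ E : ℝ) < r * p.toReal) :
    MemLp (fun x : E => (1 + ‖x‖) ^ (-r)) p μ := by
  rw [← integrable_norm_rpow_iff (Measurable.aestronglyMeasurable (by fun_prop)) hp0 hp]
  refine (integrable_one_add_norm (μ := μ) hr).congr (ae_of_all _ fun x => ?_)
  dsimp only
  rw [Real.norm_of_nonneg (by positivity), ← Real.rpow_mul (by positivity), neg_mul]

end

theorem inv_one_add_rpow_le {a α : ℝ} (ha : 0 ≤ a) (hα : 0 ≤ α) :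
    (1 + a ^ α)⁻¹ ≤ 2 ^ α * (1 + a) ^ (-α) := by
  have hle : (1 + a) ^ α ≤ 2 ^ α * (1 + a ^ α) := by
    rcases le_total a 1 with ha1 | ha1
    · calc (1 + a) ^ α ≤ 2 ^ α := Real.rpow_le_rpow (by positivity) (by linarith) hα
        _ ≤ 2 ^ α * (1 + a ^ α) := le_mul_of_one_le_right (by positivity)
            (le_add_of_nonneg_right (by positivity))
    · calc (1 + a) ^ α ≤ (2 * a) ^ α := Real.rpow_le_rpow (by positivity) (by linarith) hα
        _ = 2 ^ α * a ^ α := Real.mul_rpow (by norm_num) ha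
        _ ≤ 2 ^ α * (1 + a ^ α) := by gcongr; linarith
  rw [Real.rpow_neg (by positivity), ← div_eq_mul_inv, le_div_iff₀ (by positivity),
    inv_mul_le_iff₀ (by positivity), mul_comm]
  exact hle

theorem norm_integral_Iic_le_of_integral_eq_zero {E : Type*} [NormedAddCommGroup E]
    [NormedSpace ℝ E]
    {f : ℝ → E} {α : ℝ} (hα : 0 ≤ α) (hf : Integrable f)
    (hwf : Integrable (fun t => (1 + |t| ^ α) • f t)) (h0 : ∫ t, f t = 0) (x : ℝ) :
    ‖∫ t in Set.Iic x, f t‖ ≤ (∫ t, ‖(1 + |t| ^ α) • f t‖) / (1 + |x| ^ α) := by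
  have hmono : ∀ t, |x| ≤ |t| → 1 + |x| ^ α ≤ 1 + |t| ^ α := fun t ht => by gcongr
  rcases le_or_gt 0 x with hx | hx
  · have htail : ∫ t in Set.Iic x, f t = -∫ t in Set.Ioi x, f t := by
      rw [eq_neg_iff_add_eq_zero, ← Set.compl_Iic, integral_add_compl measurableSet_Iic hf, h0]
    rw [htail, norm_neg]
    refine norm_setIntegral_le_integral_norm_smul_div measurableSet_Ioi (by positivity)
      (fun t ht => hmono t ?_) hwf
    rw [abs_of_nonneg hx, abs_of_pos (hx.trans_lt ht)]
    exact ht.le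
  · refine norm_setIntegral_le_integral_norm_smul_div measurableSet_Iic (by positivity)
      (fun t ht => hmono t ?_) hwf
    rw [abs_of_neg hx, abs_of_neg (lt_of_le_of_lt ht hx)]
    exact neg_le_neg ht

theorem MeasureTheory.Integrable.continuous_integral_Iic {E : Type*} [NormedAddCommGroup E]
    [NormedSpace ℝ E] {μ : Measure ℝ} [NullSingletonClass μ] {f : ℝ → E} (hf : Integrable f μ) :
    Continuous fun x => ∫ t in Set.Iic x, f t ∂μ := by
  have h : ∀ x, ∫ t in Set.Iic x, f t ∂μ = (∫ t in Set.Iic 0, f t ∂μ) + ∫ t in 0..x, f t ∂μ :=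
    fun x => by
      rw [← intervalIntegral.integral_Iic_sub_Iic hf.integrableOn hf.integrableOn,
        add_sub_cancel]
  exact (continuous_congr h).2 (continuous_const.add (hf.continuous_primitive 0))

theorem stmt7_general (p α : ℝ) (hp : 1 ≤ p) (hα : 1 / p < α)
    (f : ℝ → ℝ)
    (hi : Integrable (fun t => (1 + |t| ^ α) * f t) volume)
    (h0 : ∫ t : ℝ, f t = 0) :
    MemLp (fun x => ∫ t in Set.Iic x, f t) (ENNReal.ofReal p) volume := by
  have hp0 : 0 < p := one_pos.trans_le hp
  have hα0 : 0 ≤ α := ((one_div_pos.2 hp0).trans hα).le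
  have hαp : 1 < α * p := (div_lt_iff₀ hp0).1 hα
  have hf : Integrable f := hi.of_smul_of_one_le (by fun_prop)
    fun t => le_add_of_nonneg_right (by positivity)
  have hweight : MemLp (fun x : ℝ => (1 + ‖x‖) ^ (-α)) (ENNReal.ofReal p) volume :=
    memLp_one_add_norm_rpow_neg (by simpa) ENNReal.ofReal_ne_top (by simpa [hp0.le] using hαp)
  set K := ∫ t, ‖(1 + |t| ^ α) * f t‖
  refine (hweight.const_mul (2 ^ α * K)).of_le hf.continuous_integral_Iic.aestronglyMeasurable
    (ae_of_all _ fun x => ?_)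
  calc ‖∫ t in Set.Iic x, f t‖ ≤ K / (1 + |x| ^ α) :=
        norm_integral_Iic_le_of_integral_eq_zero hα0 hf hi h0 x
    _ ≤ K * (2 ^ α * (1 + |x|) ^ (-α)) := by
        rw [div_eq_mul_inv]
        gcongr
        exact inv_one_add_rpow_le (abs_nonneg x) hα0
    _ = ‖2 ^ α * K * (1 + ‖x‖) ^ (-α)‖ := by
        rw [Real.norm_of_nonneg (by positivity), Real.norm_eq_abs]
        ring

/-- If `f : ℝ → ℝ` is measurable, `t ↦ (1 + |t|^α) f(t)` is integrable for some
`α > 1/p` (`1 ≤ p < ∞`) and `∫ f = 0`, then `F(x) = ∫_{-∞}^x f(t) dt` belongs to `L^p(ℝ)`. -/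
theorem stmt7 (p α : ℝ) (hp : 1 ≤ p) (hα : 1 / p < α)
    (f : ℝ → ℝ) (hm : Measurable f)
    (hi : Integrable (fun t => (1 + |t| ^ α) * f t) volume)
    (h0 : ∫ t : ℝ, f t = 0) :
    MemLp (fun x => ∫ t in Set.Iic x, f t) (ENNReal.ofReal p) volume :=
  stmt7_general p α hp hα f hi h0
end
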